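/- Let X be an exact divergence-free vector field on a closed oriented 3-manifold M (ι_X μ = dα), and suppose X admits two null-homologous periodic orbits γ₁, γ₂ (oriented by the flow direction) with ∫_{γ₁} α > 0 and ∫_{γ₂} α < 0. Then there exists a nontrivial exact foliation cycle z of X with z(α) = 0; in particular, by the McDuff–Sullivan criterion, X is not of contact type. -/
import Mathlib


/-!
STATEMENT 4: If an exact divergence-free field X has two null-homologous
periodic orbits γ₁, γ₂ with ∫_{γ₁} α > 0 and ∫_{γ₂} α < 0 for a primitive α of
ι_X μ, then there is a nontrivial exact foliation cycle z of X with z(α) = 0;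
by the McDuff–Sullivan criterion X is not of contact type.

1-forms on M form an abstract real vector space Ω; 1-currents are linear
functionals on Ω.  The foliation currents of X form a cone closed under
nonnegative combinations; exactness of cycles is closed under linear
combinations.  The orbits define integration currents c₁, c₂ that are exact
foliation cycles; the auxiliary form β (any 1-form positive on X) certifies
nontriviality.  The McDuff–Sullivan criterion is taken as hypothesis.
-/

theorem stmt_4
    {Ω : Type*} [AddCommGroup Ω] [Module ℝ Ω]  -- the space of 1-forms on M
    (foliationCone : Set (Ω →ₗ[ℝ] ℝ))          -- foliation currents of X
    (isExact : (Ω →ₗ[ℝ] ℝ) → Prop)             -- exact 1-currents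
    (hcone : ∀ (a b : ℝ) (z₁ z₂ : Ω →ₗ[ℝ] ℝ), 0 ≤ a → 0 ≤ b →
      z₁ ∈ foliationCone → z₂ ∈ foliationCone → a • z₁ + b • z₂ ∈ foliationCone)
    (hexact : ∀ (a b : ℝ) (z₁ z₂ : Ω →ₗ[ℝ] ℝ), isExact z₁ → isExact z₂ →
      isExact (a • z₁ + b • z₂))
    (α : Ω)                                    -- a primitive of ι_X μ
    (c₁ c₂ : Ω →ₗ[ℝ] ℝ)                        -- integration over γ₁, γ₂
    (h₁ : c₁ ∈ foliationCone) (h₂ : c₂ ∈ foliationCone)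
    (he₁ : isExact c₁) (he₂ : isExact c₂)      -- γ₁, γ₂ are null-homologous
    (hpos : 0 < c₁ α) (hneg : c₂ α < 0)
    -- a 1-form that is positive on X, hence integrates positively on any orbit
    (β : Ω) (hβ₁ : 0 < c₁ β) (hβ₂ : 0 < c₂ β)
    -- McDuff–Sullivan criterion: if X is of contact type, every nontrivial
    -- exact foliation cycle pairs nontrivially with the primitive α
    (isContactType : Prop)
    (hMcDuff : isContactType →
      ∀ z ∈ foliationCone, isExact z → z ≠ 0 → z α ≠ 0) :
    (∃ z ∈ foliationCone, isExact z ∧ z ≠ 0 ∧ z α = 0) ∧ ¬ isContactType := by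
  set z : Ω →ₗ[ℝ] ℝ := (-c₂ α) • c₁ + (c₁ α) • c₂ with hz
  have hmem : z ∈ foliationCone := hcone _ _ _ _ (by linarith) hpos.le h₁ h₂
  have hex : isExact z := hexact _ _ _ _ he₁ he₂
  have hzα : z α = 0 := by simp [hz]; ring
  have hzβ : 0 < z β := by
    have : z β = (-c₂ α) * c₁ β + (c₁ α) * c₂ β := by simp [hz]
    rw [this]
    have := mul_pos (neg_pos.mpr hneg) hβ₁
    have := mul_pos hpos hβ₂
    linarith
  have hzne : z ≠ 0 := by
    intro h; rw [h] at hzβ; simp at hzβ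
  refine ⟨⟨z, hmem, hex, hzne, hzα⟩, fun hc => ?_⟩
  exact hMcDuff hc z hmem hex hzne hzα
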